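/- arXiv:1504.05947 — 3 statements merged into one kernel-verified Lean document; each statement's English description precedes it below -/
import Mathlib

section
/- Let D be an atomic Boolean algebra and let A be a subalgebra of D that is complete in D (i.e., whenever a subset S of A has a supremum in A, that supremum equals the supremum of S computed in D). Then A is atomic. -/
/-!
Suppose `a ∈ A` is nonzero but has no atom of `A` below it, and pick an atom `d` of `D` below `a`.
Every nonzero element of `A` below `a` splits in `A` into two nonzero disjoint pieces, and `d`
misses one of them. Hence `a \ u = ⊥` for every `u ∈ A` bounding the elements of `A` below `a`
that are disjoint from `d`, i.e. `a` is their supremum in `A`. Completeness makes `a` their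
supremum in `D` too, but `a \ d` is a smaller upper bound in `D`.
-/

variable {D : Type*} [BooleanAlgebra D]

/-- `A` is (the carrier of) a Boolean subalgebra of `D`. -/
def IsSubalgebra (A : Set D) : Prop :=
  ⊥ ∈ A ∧ ⊤ ∈ A ∧ (∀ x ∈ A, ∀ y ∈ A, x ⊔ y ∈ A) ∧
    (∀ x ∈ A, ∀ y ∈ A, x ⊓ y ∈ A) ∧ (∀ x ∈ A, xᶜ ∈ A)

/-- `A ⊆_c D`: every supremum existing in (the subposet) `A` is a supremum in `D`. -/
def IsCompleteSub (A : Set D) : Prop :=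
  ∀ (S : Set D) (a : D), S ⊆ A → a ∈ A → a ∈ upperBounds S →
    (∀ u ∈ A, u ∈ upperBounds S → a ≤ u) → IsLUB S a

/-- `a` is an atom of the subalgebra with carrier `A`. -/
def IsAtomIn (A : Set D) (a : D) : Prop :=
  a ∈ A ∧ a ≠ ⊥ ∧ ∀ b ∈ A, b ≠ ⊥ → b ≤ a → b = a

section

variable {A : Set D}

theorem IsSubalgebra.sdiff_mem (hA : IsSubalgebra A) {x y : D} (hx : x ∈ A) (hy : y ∈ A) :
    x \ y ∈ A := by
  rw [sdiff_eq]
  exact hA.2.2.2.1 x hx _ (hA.2.2.2.2 y hy)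

theorem IsSubalgebra.exists_disjoint_of_not_isAtomIn (hA : IsSubalgebra A) {d : D}
    (hd : IsAtom d) {c : D} (hc : c ∈ A) (hc₀ : c ≠ ⊥) (hnot : ¬ IsAtomIn A c) :
    ∃ x ∈ A, x ≠ ⊥ ∧ x ≤ c ∧ Disjoint x d := by
  simp only [IsAtomIn, not_and, not_forall] at hnot
  obtain ⟨b, hb, hb₀, hbc, hbne⟩ := hnot hc hc₀
  by_cases hdb : d ≤ b
  · refine ⟨c \ b, hA.sdiff_mem hc hb, ?_, sdiff_le, disjoint_sdiff_self_left.mono_right hdb⟩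
    exact fun h ↦ hbne (le_antisymm hbc (sdiff_eq_bot_iff.mp h))
  · exact ⟨b, hb, hb₀, hbc, (hd.not_le_iff_disjoint.mp hdb).symm⟩

theorem IsSubalgebra.le_of_mem_upperBounds_disjoint (hA : IsSubalgebra A) {d : D}
    (hd : IsAtom d) {a : D} (ha : a ∈ A) (hno : ∀ b, IsAtomIn A b → ¬ b ≤ a) {u : D}
    (hu : u ∈ A) (hub : u ∈ upperBounds {x ∈ A | x ≤ a ∧ Disjoint x d}) : a ≤ u := by
  by_contra hau
  have hc₀ : a \ u ≠ ⊥ := fun h ↦ hau (sdiff_eq_bot_iff.mp h)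
  obtain ⟨x, hx, hx₀, hxc, hxd⟩ := hA.exists_disjoint_of_not_isAtomIn hd (hA.sdiff_mem ha hu)
    hc₀ fun hat ↦ hno _ hat sdiff_le
  have hxu : x ≤ u := hub ⟨hx, hxc.trans sdiff_le, hxd⟩
  exact hx₀ ((disjoint_sdiff_self_left.mono_left hxc).eq_bot_of_le hxu)

end

/-- If `D` is an atomic Boolean algebra and `A ⊆_c D` is a complete subalgebra,
then `A` is atomic. -/
theorem complete_subalgebra_of_atomic_is_atomic
    (hD : IsAtomic D) (A : Set D) (hA : IsSubalgebra A) (hc : IsCompleteSub A) :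
    ∀ a ∈ A, a ≠ ⊥ → ∃ b, IsAtomIn A b ∧ b ≤ a := by
  intro a ha ha₀
  by_contra! hno
  obtain ⟨d, hd, hda⟩ := (hD.eq_bot_or_exists_atom_le a).resolve_left ha₀
  have hlub : IsLUB {x ∈ A | x ≤ a ∧ Disjoint x d} a :=
    hc _ a (fun _ hx ↦ hx.1) ha (fun _ hx ↦ hx.2.1)
      fun _ hu hub ↦ hA.le_of_mem_upperBounds_disjoint hd ha hno hu hub
  have ha_le : a ≤ a \ d := hlub.2 fun _ hx ↦ le_sdiff.mpr hx.2
  exact hd.1 (disjoint_self.mp (le_sdiff.mp (hda.trans ha_le)).2)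
end

section
/- Let ω ≤ α < β, B a cylindric algebra of dimension β, D = Nr_α B its α-neat reduct, S ⊆ D with sup_D S = 1, and suppose d ∈ B satisfies s ≤ d for all s ∈ S. Then setting J = Δd \ α (a finite set, assuming B is dimension-complemented so that Δd \ α is finite) and t = −c_{(J)}(−d), the element t belongs to D, s ≤ t for all s ∈ S, and t = 1 implies d = 1. Consequently Nr_α B is a complete subalgebra of B: sup_D S = 1 implies sup_B S = 1. -/
variable {B : Type*} [BooleanAlgebra B] {I : Type*}

/-- The carrier of the neat reduct `Nr_α B`: elements fixed by all cylindrifiers with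
index outside `J0` (which plays the role of `α ⊆ β`). -/
def NrSet (c : I → B → B) (J0 : Set I) : Set B := {x : B | ∀ i ∉ J0, c i x = x}

/-- `cList c L x` is the composition `c_{(J)} x` of the cylindrifiers indexed by the
list `L` applied to `x`. -/
def cList (c : I → B → B) (L : List I) (x : B) : B := L.foldr (fun i y => c i y) x

/-! The element `t = −c_{(J)}(−e)` is the largest element below `e` that is fixed by every
cylindrification `c_i` with `i ∉ J0`: each `c_i` with `i ∈ J` fixes `c_{(J)}(−e)` by idempotence
and commutation, every other `c_i` with `i ∉ J0` already fixes `e` and commutes past `c_{(J)}`,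
and the fixed points of a cylindrification are closed under complement. An upper bound `u ∈ B`
of `S` therefore yields the upper bound `−c_{(J)}(−u)` in the neat reduct, which is `⊤` by the
hypothesis on `S`; as it lies below `u`, so is `u`. -/

/-- A quantifier in the sense of Halmos; every cylindrification `c i` is one. -/
structure IsQuantifier (q : B → B) : Prop where
  map_bot : q ⊥ = ⊥
  le_map : ∀ x, x ≤ q x
  map_inf_map : ∀ x y, q (x ⊓ q y) = q x ⊓ q y

namespace IsQuantifier

variable {q : B → B} (hq : IsQuantifier q)
include hq

theorem map_top : q ⊤ = ⊤ := top_le_iff.mp (hq.le_map ⊤)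

theorem map_map (x : B) : q (q x) = q x := by
  simpa [hq.map_top] using hq.map_inf_map ⊤ x

theorem monotone : Monotone q := fun x y hxy => by
  calc q x = q (x ⊓ q y) := by rw [inf_eq_left.mpr (hxy.trans (hq.le_map y))]
    _ = q x ⊓ q y := hq.map_inf_map x y
    _ ≤ q y := inf_le_right

theorem map_compl_of_map_eq {x : B} (hx : q x = x) : q xᶜ = xᶜ := by
  have h := hq.map_inf_map xᶜ x
  rw [hx, compl_inf_self, hq.map_bot, eq_comm, ← disjoint_iff] at h
  exact le_antisymm h.le_compl_right (hq.le_map xᶜ)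

end IsQuantifier

theorem map_cList_of_map_eq {α : Type*} {c : I → α → α}
    (hcomm : ∀ i j (x : α), c i (c j x) = c j (c i x)) {i : I} (L : List I) {x : α}
    (hx : c i x = x) : c i (cList c L x) = cList c L x := by
  induction L with
  | nil => exact hx
  | cons j L ih =>
    change c i (c j (cList c L x)) = c j (cList c L x)
    rw [hcomm i j, ih]

section cList

variable {c : I → B → B}

theorem le_cList (hq : ∀ i, IsQuantifier (c i)) (L : List I) (x : B) : x ≤ cList c L x := by
  induction L with
  | nil => exact le_rfl
  | cons j L ih => exact ih.trans ((hq j).le_map _)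

theorem cList_le_of_map_eq (hq : ∀ i, IsQuantifier (c i)) {L : List I} {x y : B} (hxy : x ≤ y)
    (hy : ∀ i ∈ L, c i y = y) : cList c L x ≤ y := by
  induction L with
  | nil => exact hxy
  | cons j L ih =>
    calc c j (cList c L x) ≤ c j y :=
          (hq j).monotone (ih fun i hi => hy i (List.mem_cons_of_mem j hi))
      _ = y := hy j List.mem_cons_self

theorem map_cList_of_mem (hq : ∀ i, IsQuantifier (c i))
    (hcomm : ∀ i j (x : B), c i (c j x) = c j (c i x)) {i : I} {L : List I} (hi : i ∈ L)
    (x : B) : c i (cList c L x) = cList c L x := by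
  induction L with
  | nil => simp at hi
  | cons j L ih =>
    change c i (c j (cList c L x)) = c j (cList c L x)
    rcases List.mem_cons.mp hi with rfl | hi
    · exact (hq i).map_map _
    · rw [hcomm i j, ih hi]

end cList

section NeatReduct

variable {c : I → B → B} (hq : ∀ i, IsQuantifier (c i)) {J0 : Set I} {L : List I} {e : B}
include hq

theorem compl_cList_compl_mem_NrSet (hcomm : ∀ i j (x : B), c i (c j x) = c j (c i x))
    (hL : ∀ i ∉ J0, c i e ≠ e → i ∈ L) : (cList c L eᶜ)ᶜ ∈ NrSet c J0 := by
  intro i hi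
  refine (hq i).map_compl_of_map_eq ?_
  by_cases hiL : i ∈ L
  · exact map_cList_of_mem hq hcomm hiL eᶜ
  · have hce : c i e = e := not_not.mp fun hne => hiL (hL i hi hne)
    exact map_cList_of_map_eq hcomm L ((hq i).map_compl_of_map_eq hce)

theorem le_compl_cList_compl (hL : ∀ i ∈ L, i ∉ J0) {s : B} (hs : s ∈ NrSet c J0)
    (hse : s ≤ e) : s ≤ (cList c L eᶜ)ᶜ :=
  le_compl_comm.mp <| cList_le_of_map_eq hq (compl_le_compl hse) fun i hi =>
    (hq i).map_compl_of_map_eq (hs i (hL i hi))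

theorem eq_top_of_compl_cList_compl_eq_top (ht : (cList c L eᶜ)ᶜ = ⊤) : e = ⊤ := by
  rw [compl_eq_top] at ht
  exact compl_eq_bot.mp (le_bot_iff.mp (ht ▸ le_cList hq L eᶜ))

end NeatReduct

theorem neat_reduct_complete_subalgebra_general
    (c : I → B → B)
    (ax1 : ∀ i, c i ⊥ = ⊥)
    (ax2 : ∀ i (x : B), x ≤ c i x)
    (ax3 : ∀ i (x y : B), c i (x ⊓ c i y) = c i x ⊓ c i y)
    (ax4 : ∀ i j (x : B), c i (c j x) = c j (c i x))
    (J0 : Set I)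
    -- so that Δx \ α is finite for every x
    (hfin : ∀ x : B, ({i : I | c i x ≠ x} \ J0).Finite)
    (S : Set B) (hS : S ⊆ NrSet c J0)
    -- sup_D S = ⊤ :
    (hsup : ∀ u ∈ NrSet c J0, u ∈ upperBounds S → ⊤ ≤ u)
    (e : B) (he : ∀ s ∈ S, s ≤ e)
    (L : List I) (hL : ∀ i : I, i ∈ L ↔ (c i e ≠ e ∧ i ∉ J0)) :
    (cList c L eᶜ)ᶜ ∈ NrSet c J0 ∧
    (∀ s ∈ S, s ≤ (cList c L eᶜ)ᶜ) ∧
    ((cList c L eᶜ)ᶜ = ⊤ → e = ⊤) ∧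
    IsLUB S ⊤ := by
  have hq : ∀ i, IsQuantifier (c i) := fun i => ⟨ax1 i, ax2 i, ax3 i⟩
  have reduct_bound : ∀ u ∈ upperBounds S, ∀ L : List I, (∀ i, i ∈ L ↔ (c i u ≠ u ∧ i ∉ J0)) →
      (cList c L uᶜ)ᶜ ∈ NrSet c J0 ∧ ∀ s ∈ S, s ≤ (cList c L uᶜ)ᶜ := fun u hu L hL =>
    ⟨compl_cList_compl_mem_NrSet hq ax4 fun i hi hne => (hL i).mpr ⟨hne, hi⟩,
      fun s hs => le_compl_cList_compl hq (fun i hiL => ((hL i).mp hiL).2) (hS hs) (hu hs)⟩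
  obtain ⟨he_mem, he_le⟩ := reduct_bound e he L hL
  refine ⟨he_mem, he_le, eq_top_of_compl_cList_compl_eq_top hq, fun s _ => le_top, fun u hu => ?_⟩
  obtain ⟨Lu, hLu⟩ : ∃ Lu : List I, ∀ i, i ∈ Lu ↔ (c i u ≠ u ∧ i ∉ J0) :=
    ⟨(hfin u).toFinset.toList, fun i => by simp⟩
  obtain ⟨hu_mem, hu_le⟩ := reduct_bound u hu Lu hLu
  exact (eq_top_of_compl_cList_compl_eq_top hq (top_le_iff.mp (hsup _ hu_mem hu_le))).ge

/-- Let `ω ≤ α < β`, `B ∈ CA_β` dimension-complemented, `D = Nr_α B`, `S ⊆ D` with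
`sup_D S = ⊤`, and `e ∈ B` an upper bound of `S`. With `J = Δe \ α` (finite) and
`t = −c_{(J)}(−e)`: `t ∈ D`, `s ≤ t` for all `s ∈ S`, and `t = ⊤` implies `e = ⊤`.
Consequently `Nr_α B ⊆_c B`: `sup_D S = ⊤` implies `sup_B S = ⊤`. -/
theorem neat_reduct_complete_subalgebra
    (c : I → B → B) (d : I → I → B)
    (ax1 : ∀ i, c i ⊥ = ⊥)
    (ax2 : ∀ i (x : B), x ≤ c i x)
    (ax3 : ∀ i (x y : B), c i (x ⊓ c i y) = c i x ⊓ c i y)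
    (ax4 : ∀ i j (x : B), c i (c j x) = c j (c i x))
    (ax5 : ∀ i, d i i = ⊤)
    (ax6 : ∀ i j k, k ≠ i → k ≠ j → d i j = c k (d i k ⊓ d k j))
    (J0 : Set I) (hJ0 : J0.Infinite)  -- ω ≤ α
    -- B is dimension complemented: β \ Δx is infinite for every x
    (hdc : ∀ x : B, {i : I | c i x ≠ x}ᶜ.Infinite)
    -- so that Δx \ α is finite for every x
    (hfin : ∀ x : B, ({i : I | c i x ≠ x} \ J0).Finite)
    (S : Set B) (hS : S ⊆ NrSet c J0)
    -- sup_D S = ⊤ :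
    (hsup : ∀ u ∈ NrSet c J0, u ∈ upperBounds S → ⊤ ≤ u)
    (e : B) (he : ∀ s ∈ S, s ≤ e)
    (L : List I) (hL : ∀ i : I, i ∈ L ↔ (c i e ≠ e ∧ i ∉ J0)) :
    (cList c L eᶜ)ᶜ ∈ NrSet c J0 ∧
    (∀ s ∈ S, s ≤ (cList c L eᶜ)ᶜ) ∧
    ((cList c L eᶜ)ᶜ = ⊤ → e = ⊤) ∧
    IsLUB S ⊤ :=
  neat_reduct_complete_subalgebra_general c ax1 ax2 ax3 ax4 J0 hfin S hS hsup e he L hL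
end

section
/- Let β be a regular cardinal, B a cylindric-like Boolean algebra with operators of dimension β such that every element x has dimension set Δx of cardinality < β, with substitution operators s^k_l satisfying s^k_l x ≤ c_k x, and such that c_l x = x and c_l y = y with s^k_l x ≤ y imply c_k x ≤ y. Then for every k < β and x ∈ B, the supremum of {s^k_l x : l < β} exists in B and equals c_k x. -/
universe u

open Cardinal

theorem Cardinal.mk_union_lt_of_aleph0_le {I : Type*} {s t : Set I} (hI : ℵ₀ ≤ #I)
    (hs : #s < #I) (ht : #t < #I) : #(s ∪ t : Set I) < #I :=
  (mk_union_le s t).trans_lt (add_lt_of_lt hI hs ht)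

theorem exists_common_fixed_index {B I : Type*} (hI : ℵ₀ ≤ #I) (c : I → B → B)
    (hdim : ∀ x : B, #{i : I // c i x ≠ x} < #I) (x y : B) :
    ∃ l, c l x = x ∧ c l y = y := by
  obtain ⟨l, hl⟩ := compl_nonempty_of_mk_lt_mk
    (mk_union_lt_of_aleph0_le (s := {i | c i x ≠ x}) (t := {i | c i y ≠ y}) hI (hdim x) (hdim y))
  simp only [Set.mem_compl_iff, Set.mem_union, Set.mem_ofPred_eq, not_or, not_not] at hl
  exact ⟨l, hl⟩

/-- If the dimension `β` is a regular cardinal, every element has dimension set of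
cardinality `< β`, and the substitution operators satisfy `s^k_l x ≤ c_k x` together
with the key bounding property, then `c_k x = sup_{l < β} s^k_l x` for all `k, x`. -/
theorem cyl_is_sup_of_substitutions
    {B : Type u} [BooleanAlgebra B] {I : Type u}
    (hreg : (Cardinal.mk I).IsRegular)
    (c : I → B → B) (s : I → I → B → B)
    (hdim : ∀ x : B, Cardinal.mk {i : I // c i x ≠ x} < Cardinal.mk I)
    (h1 : ∀ k l (x : B), s k l x ≤ c k x)
    (h2 : ∀ k l (x y : B), c l x = x → c l y = y → s k l x ≤ y → c k x ≤ y) :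
    ∀ k (x : B), IsLUB (Set.range fun l => s k l x) (c k x) := by
  intro k x
  refine ⟨Set.forall_mem_range.2 (h1 k · x), fun y hy => ?_⟩
  obtain ⟨l, hlx, hly⟩ := exists_common_fixed_index hreg.aleph0_le c hdim x y
  exact h2 k l x y hlx hly (hy ⟨l, rfl⟩)
end
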